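/- Theorem 2.1, part 2 (finiteness of the expected score as t → 0). Let π be a probability measure on Θ such that (i) the function θ ↦ Q(θ,Y) is π-integrable, and (ii) there exists M < ∞ with f(Y|θ,t) ≤ M for all t ∈ [0,1] and π-almost every θ. Then z_0 > 0, and as t → 0⁺ the expected score E_t(U) = (∫_Θ U(θ,Y,t) f(Y|θ,t) dπ(θ)) / z_t converges to the finite limit (∫_Θ U(θ,Y,0) f(Y|θ,0) dπ(θ)) / z_0; in particular lim_{t→0⁺} E_t(U) exists and is finite. -/

import Mathlib

/-!
Both integrals are continuous in `t` on `[0, 1]` by dominated convergence. The likelihood is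
dominated by `M`; and since `Λ_t` only scales the last column by `|t| ≤ 1`, the score satisfies
`|U(θ,Y,t)| ≤ Q(θ,Y)`, so the numerator's integrand is dominated by `Q · M`. The likelihood is
strictly positive, hence so is `z_0`, and the expected score, a quotient of continuous
functions with nonvanishing denominator at `0`, is continuous there.
-/

open MeasureTheory Real Filter Set

/-- The parameter space Θ of a factor model with `p` outcomes, `k+1` factors and `n`
observations: loadings Λ ∈ ℝ^{p×(k+1)}, variances σ² ∈ (0,∞)^p and latent factors
η = (η₁,…,η_n), ηᵢ ∈ ℝ^{k+1}. -/
abbrev FactorParam (p k n : ℕ) : Type :=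
  Matrix (Fin p) (Fin (k + 1)) ℝ × {σ : Fin p → ℝ // ∀ j, 0 < σ j} ×
    (Fin n → Fin (k + 1) → ℝ)

/-- Λ_t : the matrix obtained from Λ by multiplying its last column by `t` (PAMP). -/
def pathLam {p k : ℕ} (t : ℝ) (Λ : Matrix (Fin p) (Fin (k + 1)) ℝ) :
    Matrix (Fin p) (Fin (k + 1)) ℝ :=
  fun j l => if l = Fin.last k then t * Λ j l else Λ j l

/-- The factor model likelihood f(Y|θ) = ∏ᵢ∏ⱼ (2πσⱼ²)^{-1/2} exp(−(y_{ij} − (Ληᵢ)_j)²/(2σⱼ²)). -/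
noncomputable def lik {p k n : ℕ} (Y : Fin n → Fin p → ℝ) (θ : FactorParam p k n) : ℝ :=
  ∏ i : Fin n, ∏ j : Fin p,
    (2 * π * θ.2.1.1 j) ^ (-(1 : ℝ) / 2) *
      Real.exp (-(Y i j - ∑ l, θ.1 j l * θ.2.2 i l) ^ 2 / (2 * θ.2.1.1 j))

/-- The likelihood along the parametric arithmetic mean path: f(Y|θ,t) = f(Y|(Λ_t,σ²,η)). -/
noncomputable def pathLik {p k n : ℕ} (Y : Fin n → Fin p → ℝ) (θ : FactorParam p k n)
    (t : ℝ) : ℝ :=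
  lik Y (pathLam t θ.1, θ.2)

/-- The score function U(θ,Y,t) = ∑ᵢ∑ⱼ (y_{ij} − (Λ_t ηᵢ)_j) σⱼ^{−2} Λ_{jk} η_{ik}. -/
noncomputable def scoreU {p k n : ℕ} (Y : Fin n → Fin p → ℝ) (θ : FactorParam p k n)
    (t : ℝ) : ℝ :=
  ∑ i : Fin n, ∑ j : Fin p,
    (Y i j - ∑ l, pathLam t θ.1 j l * θ.2.2 i l) * (θ.2.1.1 j)⁻¹ *
      (θ.1 j (Fin.last k) * θ.2.2 i (Fin.last k))

/-- The dominating function Q(θ,Y), free of t. -/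
noncomputable def Qbound {p k n : ℕ} (Y : Fin n → Fin p → ℝ) (θ : FactorParam p k n) : ℝ :=
  ∑ i : Fin n, ∑ j : Fin p,
    (|Y i j| + ∑ l, |θ.1 j l| * |θ.2.2 i l|) * (θ.2.1.1 j)⁻¹ *
      (|θ.1 j (Fin.last k)| * |θ.2.2 i (Fin.last k)|)

/-- The Borel-type product σ-algebra on the space of loading matrices. -/
instance {p k : ℕ} : MeasurableSpace (Matrix (Fin p) (Fin (k + 1)) ℝ) :=
  MeasurableSpace.pi

theorem integral_pos_of_forall_pos {α : Type*} [MeasurableSpace α] {μ : Measure α} [NeZero μ]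
    {f : α → ℝ} (hf : ∀ x, 0 < f x) (hfi : Integrable f μ) : 0 < ∫ x, f x ∂μ := by
  rw [integral_pos_iff_support_of_nonneg (fun x => (hf x).le) hfi,
    Function.support_eq_univ fun x => (hf x).ne', Measure.measure_univ_pos]
  exact NeZero.ne μ

section FactorModel

variable {p k n : ℕ}

lemma abs_pathLam_le {t : ℝ} (ht : |t| ≤ 1) (Λ : Matrix (Fin p) (Fin (k + 1)) ℝ) (j l) :
    |pathLam t Λ j l| ≤ |Λ j l| := by
  unfold pathLam
  split_ifs
  · rw [abs_mul]
    exact mul_le_of_le_one_left (abs_nonneg _) ht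
  · exact le_rfl

@[fun_prop]
lemma continuous_pathLam_apply (Λ : Matrix (Fin p) (Fin (k + 1)) ℝ) (j l) :
    Continuous fun t => pathLam t Λ j l := by
  unfold pathLam
  split_ifs <;> fun_prop

@[fun_prop]
lemma measurable_pathLam_apply (t : ℝ) (j l) :
    Measurable fun Λ : Matrix (Fin p) (Fin (k + 1)) ℝ => pathLam t Λ j l := by
  unfold pathLam
  split_ifs <;> fun_prop

@[fun_prop]
lemma measurable_variance_apply (j : Fin p) :
    Measurable fun θ : FactorParam p k n => (θ.2.1 : Fin p → ℝ) j :=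
  (measurable_pi_apply j).comp (measurable_subtype_coe.comp (measurable_fst.comp measurable_snd))

variable (Y : Fin n → Fin p → ℝ)

lemma lik_pos (θ : FactorParam p k n) : 0 < lik Y θ := by
  refine Finset.prod_pos fun i _ => Finset.prod_pos fun j _ => mul_pos ?_ (exp_pos _)
  have := θ.2.1.2 j
  positivity

lemma pathLik_pos (θ : FactorParam p k n) (t : ℝ) : 0 < pathLik Y θ t :=
  lik_pos Y _

lemma measurable_pathLik (t : ℝ) : Measurable fun θ : FactorParam p k n => pathLik Y θ t := by
  unfold pathLik lik
  dsimp only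
  fun_prop

lemma continuous_pathLik (θ : FactorParam p k n) : Continuous fun t => pathLik Y θ t := by
  unfold pathLik lik
  dsimp only
  fun_prop

lemma measurable_scoreU (t : ℝ) : Measurable fun θ : FactorParam p k n => scoreU Y θ t := by
  unfold scoreU
  fun_prop

lemma continuous_scoreU (θ : FactorParam p k n) : Continuous fun t => scoreU Y θ t := by
  unfold scoreU
  fun_prop

lemma Qbound_nonneg (θ : FactorParam p k n) : 0 ≤ Qbound Y θ := by
  refine Finset.sum_nonneg fun i _ => Finset.sum_nonneg fun j _ => ?_
  have := θ.2.1.2 j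
  positivity

lemma abs_scoreU_le (θ : FactorParam p k n) {t : ℝ} (ht : |t| ≤ 1) :
    |scoreU Y θ t| ≤ Qbound Y θ := by
  refine (Finset.abs_sum_le_sum_abs _ _).trans (Finset.sum_le_sum fun i _ => ?_)
  refine (Finset.abs_sum_le_sum_abs _ _).trans (Finset.sum_le_sum fun j _ => ?_)
  have hσ := θ.2.1.2 j
  have hresid : |Y i j - ∑ l, pathLam t θ.1 j l * θ.2.2 i l|
      ≤ |Y i j| + ∑ l, |θ.1 j l| * |θ.2.2 i l| := by
    refine (abs_sub _ _).trans (add_le_add_right ?_ _)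
    refine (Finset.abs_sum_le_sum_abs _ _).trans (Finset.sum_le_sum fun l _ => ?_)
    rw [abs_mul]
    exact mul_le_mul_of_nonneg_right (abs_pathLam_le ht _ j l) (abs_nonneg _)
  rw [abs_mul, abs_mul, abs_of_pos (inv_pos.2 hσ), abs_mul]
  gcongr

variable {Y} {P : Measure (FactorParam p k n)} {M : ℝ}

lemma integrable_pathLik [IsFiniteMeasure P] (hM : ∀ᵐ θ ∂P, ∀ t ∈ Icc (0 : ℝ) 1, pathLik Y θ t ≤ M) {t : ℝ}
    (ht : t ∈ Icc (0 : ℝ) 1) : Integrable (fun θ => pathLik Y θ t) P := by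
  refine (integrable_const M).mono' (measurable_pathLik Y t).aestronglyMeasurable ?_
  filter_upwards [hM] with θ hθ
  rw [norm_of_nonneg (pathLik_pos Y θ t).le]
  exact hθ t ht

lemma continuousOn_integral_pathLik [IsFiniteMeasure P]
    (hM : ∀ᵐ θ ∂P, ∀ t ∈ Icc (0 : ℝ) 1, pathLik Y θ t ≤ M) :
    ContinuousOn (fun t => ∫ θ, pathLik Y θ t ∂P) (Icc 0 1) := by
  refine continuousOn_of_dominated (bound := fun _ => M)
    (fun t _ => (measurable_pathLik Y t).aestronglyMeasurable) (fun t ht => ?_)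
    (integrable_const M) (ae_of_all _ fun θ => (continuous_pathLik Y θ).continuousOn)
  filter_upwards [hM] with θ hθ
  rw [norm_of_nonneg (pathLik_pos Y θ t).le]
  exact hθ t ht

lemma continuousOn_integral_scoreU_mul_pathLik (hQ : Integrable (fun θ => Qbound Y θ) P)
    (hM : ∀ᵐ θ ∂P, ∀ t ∈ Icc (0 : ℝ) 1, pathLik Y θ t ≤ M) :
    ContinuousOn (fun t => ∫ θ, scoreU Y θ t * pathLik Y θ t ∂P) (Icc 0 1) := by
  refine continuousOn_of_dominated (bound := fun θ => Qbound Y θ * M)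
    (fun t _ => ((measurable_scoreU Y t).mul (measurable_pathLik Y t)).aestronglyMeasurable)
    (fun t ht => ?_) (hQ.mul_const M)
    (ae_of_all _ fun θ => ((continuous_scoreU Y θ).mul (continuous_pathLik Y θ)).continuousOn)
  filter_upwards [hM] with θ hθ
  have hf := pathLik_pos Y θ t
  calc ‖scoreU Y θ t * pathLik Y θ t‖ = |scoreU Y θ t| * pathLik Y θ t := by
        rw [norm_mul, norm_of_nonneg hf.le, Real.norm_eq_abs]
    _ ≤ Qbound Y θ * M :=
        mul_le_mul (abs_scoreU_le Y θ (abs_le.2 ⟨by linarith [ht.1], ht.2⟩)) (hθ t ht) hf.le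
          (Qbound_nonneg Y θ)

end FactorModel

theorem expected_score_finite_limit_at_zero {p k n : ℕ} (Y : Fin n → Fin p → ℝ)
    (P : MeasureTheory.Measure (FactorParam p k n)) [MeasureTheory.IsProbabilityMeasure P]
    (hQ : MeasureTheory.Integrable (fun θ => Qbound Y θ) P)
    (M : ℝ) (hM : ∀ᵐ θ ∂P, ∀ t ∈ Set.Icc (0 : ℝ) 1, pathLik Y θ t ≤ M) :
    0 < (∫ θ, pathLik Y θ 0 ∂P) ∧
      Filter.Tendsto
        (fun t : ℝ => (∫ θ, scoreU Y θ t * pathLik Y θ t ∂P) / ∫ θ, pathLik Y θ t ∂P)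
        (nhdsWithin (0 : ℝ) (Set.Ioi (0 : ℝ)))
        (nhds ((∫ θ, scoreU Y θ 0 * pathLik Y θ 0 ∂P) / ∫ θ, pathLik Y θ 0 ∂P)) := by
  have h0 : (0 : ℝ) ∈ Icc (0 : ℝ) 1 := ⟨le_rfl, zero_le_one⟩
  have hz0 : 0 < ∫ θ, pathLik Y θ 0 ∂P :=
    integral_pos_of_forall_pos (pathLik_pos Y · 0) (integrable_pathLik hM h0)
  refine ⟨hz0, ?_⟩
  have hE : ContinuousWithinAt
      (fun t => (∫ θ, scoreU Y θ t * pathLik Y θ t ∂P) / ∫ θ, pathLik Y θ t ∂P) (Icc 0 1) 0 :=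
    (continuousOn_integral_scoreU_mul_pathLik hQ hM 0 h0).div
      (continuousOn_integral_pathLik hM 0 h0) hz0.ne'
  exact hE.mono_of_mem_nhdsWithin (Icc_mem_nhdsGT zero_lt_one)
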